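/- Let X be a complex Banach space, A a positive operator on X, and α ∈ (0,1). Then the Bochner integral ∫₀^∞ s^{-α} (s+A)^{-2} ds converges in L(X) and (sin(πα)/π) ∫₀^∞ s^{-α} (s+A)^{-2} ds = α · A^{-1} ∘ A^{-α}, where A^{-1} = (0+A)^{-1} and A^{-α} = (sin(πα)/π) ∫₀^∞ s^{-α}(s+A)^{-1} ds. -/

import Mathlib

open MeasureTheory Real Set

noncomputable section

/-- `R` is a two-sided bounded inverse of `lam + A : D(A) → X`;
in particular `lam + A` is bijective from `D(A)` onto `X` with bounded inverse `R`. -/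
def ResolventAt {X : Type*} [NormedAddCommGroup X] [NormedSpace ℂ X]
    (A : X →ₗ.[ℂ] X) (lam : ℂ) (R : X →L[ℂ] X) : Prop :=
  (∀ x : A.domain, R (lam • (x : X) + A x) = x) ∧
  (∀ y : X, ∃ h : R y ∈ A.domain, lam • R y + A ⟨R y, h⟩ = y)

/-- `A` is a positive operator with constant `M ≥ 1` and resolvent family `R`. -/
structure IsPositive {X : Type*} [NormedAddCommGroup X] [NormedSpace ℂ X]
    (A : X →ₗ.[ℂ] X) (M : ℝ) (R : ℝ → X →L[ℂ] X) : Prop where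
  dense_domain : Dense (A.domain : Set X)
  closed_graph : IsClosed (A.graph : Set (X × X))
  one_le : 1 ≤ M
  resolvent : ∀ s : ℝ, 0 ≤ s → ResolventAt A (s : ℂ) (R s)
  bound : ∀ s : ℝ, 0 ≤ s → (1 + s) * ‖R s‖ ≤ M

/-- The Balakrishnan fractional power `A ^ (-α)`, expressed through the
resolvent family `R` of `A`:  `A⁻ᵅ = (sin (π α) / π) ∫₀^∞ s⁻ᵅ (s+A)⁻¹ ds`. -/
def negPow {X : Type*} [NormedAddCommGroup X] [NormedSpace ℂ X]
    (R : ℝ → X →L[ℂ] X) (α : ℝ) : X →L[ℂ] X :=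
  (Real.sin (π * α) / π) • ∫ s in Ioi (0 : ℝ), s ^ (-α) • R s

/-! The resolvent identity gives `d/ds (s+A)⁻¹ = -(s+A)⁻²` and, for
`G s = s⁻ᵅ ((s+A)⁻¹ - A⁻¹)`, `G' s = α s⁻ᵅ A⁻¹ (s+A)⁻¹ - s⁻ᵅ (s+A)⁻²`.
Since `G s = O(s^(1-α))` at `0` and `G s = O(s⁻ᵅ)` at `∞`, the fundamental theorem of calculus
on `(0, ∞)` gives `∫₀^∞ s⁻ᵅ (s+A)⁻² ds = α A⁻¹ ∫₀^∞ s⁻ᵅ (s+A)⁻¹ ds`. -/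

lemma integrableOn_rpow_neg_div_add_one {α : ℝ} (hα : α ∈ Ioo (0 : ℝ) 1) :
    IntegrableOn (fun s : ℝ => s ^ (-α) / (s + 1)) (Ioi 0) := by
  have hp : 1 - α ∈ Ioo (0 : ℝ) 1 := ⟨by linarith [hα.2], by linarith [hα.1]⟩
  refine (Real.integrableOn_rpowIntegrand₀₁_Ioi hp zero_le_one).congr_fun (fun s hs => ?_)
    measurableSet_Ioi
  -- `rpowIntegrand₀₁ (1 - α) s 1 = s⁻ᵅ / (s + 1)`
  dsimp only
  rw [Real.rpowIntegrand₀₁_eq_pow_div hp (le_of_lt hs) zero_le_one]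
  ring_nf

lemma integrableOn_rpow_neg_smul_of_norm_le {E : Type*} [NormedAddCommGroup E] [NormedSpace ℝ E]
    {α C : ℝ} (hα : α ∈ Ioo (0 : ℝ) 1) {F : ℝ → E} (hF : ContinuousOn F (Ioi 0))
    (hFC : ∀ s : ℝ, 0 < s → (1 + s) * ‖F s‖ ≤ C) :
    IntegrableOn (fun s : ℝ => s ^ (-α) • F s) (Ioi 0) := by
  have hcont : ContinuousOn (fun s : ℝ => s ^ (-α) • F s) (Ioi 0) :=
    (continuousOn_id.rpow_const fun _ hs => Or.inl (ne_of_gt hs)).smul hF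
  refine Integrable.mono' ((integrableOn_rpow_neg_div_add_one hα).const_mul C)
    (hcont.aestronglyMeasurable measurableSet_Ioi)
    (ae_restrict_of_forall_mem measurableSet_Ioi fun s (hs : 0 < s) => ?_)
  have hFs : ‖F s‖ ≤ C / (s + 1) := by
    rw [le_div_iff₀ (by linarith), add_comm, mul_comm]
    exact hFC s hs
  calc ‖s ^ (-α) • F s‖ = s ^ (-α) * ‖F s‖ := by
        rw [norm_smul, Real.norm_of_nonneg (rpow_nonneg hs.le _)]
    _ ≤ s ^ (-α) * (C / (s + 1)) := by gcongr
    _ = C * (s ^ (-α) / (s + 1)) := by ring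

namespace IsPositive

variable {X : Type*} [NormedAddCommGroup X] [NormedSpace ℂ X]
  {M : ℝ} {A : X →ₗ.[ℂ] X} {R : ℝ → X →L[ℂ] X} {α : ℝ}

theorem resolvent_sub (hA : IsPositive A M R) {s t : ℝ} (hs : 0 ≤ s) (ht : 0 ≤ t) :
    R s - R t = (t - s) • (R s).comp (R t) := by
  ext y
  obtain ⟨hmem, heq⟩ := (hA.resolvent t ht).2 y
  have hleft := (hA.resolvent s hs).1 ⟨R t y, hmem⟩
  have hval : (s : ℂ) • R t y + A ⟨R t y, hmem⟩ = ((s : ℂ) - t) • R t y + y := by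
    linear_combination (norm := module) heq
  rw [hval, map_add, map_smul] at hleft
  simp only [sub_apply, smul_apply, ContinuousLinearMap.comp_apply]
  rw [← Complex.coe_smul, Complex.ofReal_sub, eq_sub_of_add_eq' hleft]
  module

theorem norm_le (hA : IsPositive A M R) {s : ℝ} (hs : 0 ≤ s) : ‖R s‖ ≤ M := by
  nlinarith [hA.bound s hs, norm_nonneg (R s)]

theorem comp_comm (hA : IsPositive A M R) {s t : ℝ} (hs : 0 ≤ s) (ht : 0 ≤ t) :
    (R s).comp (R t) = (R t).comp (R s) := by
  rcases eq_or_ne s t with rfl | hst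
  · rfl
  refine smul_right_injective _ (sub_ne_zero.mpr hst.symm) ?_
  calc (t - s) • (R s).comp (R t) = R s - R t := (hA.resolvent_sub hs ht).symm
    _ = -(R t - R s) := (neg_sub _ _).symm
    _ = (t - s) • (R t).comp (R s) := by rw [hA.resolvent_sub ht hs]; module

theorem norm_sub_le (hA : IsPositive A M R) {s t : ℝ} (hs : 0 ≤ s) (ht : 0 ≤ t) :
    ‖R s - R t‖ ≤ M ^ 2 * |s - t| := by
  rw [hA.resolvent_sub hs ht, norm_smul, Real.norm_eq_abs, abs_sub_comm, mul_comm, sq]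
  gcongr
  exact (ContinuousLinearMap.opNorm_comp_le _ _).trans
    (mul_le_mul (hA.norm_le hs) (hA.norm_le ht) (norm_nonneg _) (by linarith [hA.one_le]))

theorem continuousOn (hA : IsPositive A M R) : ContinuousOn R (Ici 0) :=
  (LipschitzOnWith.of_dist_le_mul (K := ⟨M ^ 2, sq_nonneg M⟩) fun s hs t ht => by
    rw [dist_eq_norm, dist_eq_norm, Real.norm_eq_abs]; exact hA.norm_sub_le hs ht).continuousOn

theorem hasDerivAt (hA : IsPositive A M R) {s : ℝ} (hs : 0 < s) :
    HasDerivAt R (-(R s).comp (R s)) s := by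
  rw [hasDerivAt_iff_tendsto_slope]
  have hRs : ContinuousAt R s := hA.continuousOn.continuousAt (Ici_mem_nhds hs)
  have hlim : Filter.Tendsto (fun t => -(R t).comp (R s)) (nhdsWithin s {s}ᶜ)
      (nhds (-(R s).comp (R s))) :=
    ((((ContinuousLinearMap.compL ℂ X X X).flip (R s)).continuous.neg).tendsto (R s)).comp
      (hRs.tendsto.mono_left nhdsWithin_le_nhds)
  refine hlim.congr' ?_
  filter_upwards [nhdsWithin_le_nhds (Ioi_mem_nhds hs), self_mem_nhdsWithin]
    with t (ht : 0 < t) (hts : t ≠ s)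
  rw [slope_def_module, hA.resolvent_sub ht.le hs.le, smul_smul,
    show (t - s)⁻¹ * (s - t) = -1 by field_simp [sub_ne_zero.mpr hts]; ring, neg_one_smul]

theorem one_add_mul_norm_comp_le (hA : IsPositive A M R) (T : X →L[ℂ] X) {s : ℝ}
    (hs : 0 ≤ s) : (1 + s) * ‖T.comp (R s)‖ ≤ ‖T‖ * M :=
  calc (1 + s) * ‖T.comp (R s)‖ ≤ (1 + s) * (‖T‖ * ‖R s‖) := by
        gcongr; exact ContinuousLinearMap.opNorm_comp_le _ _
    _ = ‖T‖ * ((1 + s) * ‖R s‖) := by ring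
    _ ≤ ‖T‖ * M := by gcongr; exact hA.bound s hs

theorem hasDerivAt_rpow_smul_sub (hA : IsPositive A M R) {x : ℝ} (hx : 0 < x) :
    HasDerivAt (fun s : ℝ => s ^ (-α) • (R s - R 0))
      (α • x ^ (-α) • (R 0).comp (R x) - x ^ (-α) • (R x).comp (R x)) x := by
  refine ((hasDerivAt_rpow_const (Or.inl hx.ne')).smul
    ((hA.hasDerivAt hx).sub_const (R 0))).congr_deriv ?_
  have hpow : x ^ (-α) = x ^ (-α - 1) * x := by
    rw [← rpow_add_one hx.ne']; ring_nf
  rw [hA.resolvent_sub hx.le le_rfl, hA.comp_comm hx.le le_rfl, hpow]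
  module

theorem continuousWithinAt_rpow_smul_sub (hA : IsPositive A M R) (hα : α < 1) :
    ContinuousWithinAt (fun s : ℝ => s ^ (-α) • (R s - R 0)) (Ici 0) 0 := by
  have hlim : ContinuousWithinAt (fun s : ℝ => M ^ 2 * s ^ (1 - α)) (Ici 0) 0 :=
    (continuousAt_const.mul
      (continuousAt_rpow_const 0 _ (Or.inr (by linarith)))).continuousWithinAt
  rw [ContinuousWithinAt, sub_self, smul_zero]
  rw [ContinuousWithinAt, zero_rpow (by linarith), mul_zero] at hlim
  refine squeeze_zero_norm' ?_ hlim
  filter_upwards [self_mem_nhdsWithin] with s (hs : 0 ≤ s)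
  rcases hs.eq_or_lt with rfl | hs
  · simp [zero_rpow (by linarith : 1 - α ≠ 0)]
  calc ‖s ^ (-α) • (R s - R 0)‖ = s ^ (-α) * ‖R s - R 0‖ := by
        rw [norm_smul, Real.norm_of_nonneg (rpow_nonneg hs.le _)]
    _ ≤ s ^ (-α) * (M ^ 2 * s) := by
        gcongr
        simpa [abs_of_pos hs] using hA.norm_sub_le hs.le le_rfl
    _ = M ^ 2 * s ^ (1 - α) := by
        rw [sub_eq_neg_add, rpow_add_one hs.ne']; ring

theorem tendsto_rpow_smul_sub_atTop (hA : IsPositive A M R) (hα : 0 < α) :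
    Filter.Tendsto (fun s : ℝ => s ^ (-α) • (R s - R 0)) Filter.atTop (nhds 0) := by
  refine squeeze_zero_norm' ?_ (by simpa using (tendsto_rpow_neg_atTop hα).const_mul (2 * M))
  filter_upwards [Filter.eventually_gt_atTop 0] with s hs
  calc ‖s ^ (-α) • (R s - R 0)‖ = s ^ (-α) * ‖R s - R 0‖ := by
        rw [norm_smul, Real.norm_of_nonneg (rpow_nonneg hs.le _)]
    _ ≤ s ^ (-α) * (M + M) := by
        gcongr
        exact (_root_.norm_sub_le _ _).trans (add_le_add (hA.norm_le hs.le) (hA.norm_le le_rfl))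
    _ = 2 * M * s ^ (-α) := by ring

theorem integrableOn_rpow_smul (hA : IsPositive A M R) (hα : α ∈ Ioo (0 : ℝ) 1) :
    IntegrableOn (fun s : ℝ => s ^ (-α) • R s) (Ioi 0) :=
  integrableOn_rpow_neg_smul_of_norm_le hα (hA.continuousOn.mono Ioi_subset_Ici_self)
    fun s hs => hA.bound s hs.le

theorem integrableOn_rpow_smul_comp (hA : IsPositive A M R) (hα : α ∈ Ioo (0 : ℝ) 1)
    (T : X →L[ℂ] X) :
    IntegrableOn (fun s : ℝ => s ^ (-α) • T.comp (R s)) (Ioi 0) :=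
  integrableOn_rpow_neg_smul_of_norm_le hα
    (continuousOn_const.clm_comp (hA.continuousOn.mono Ioi_subset_Ici_self))
    fun _ hs => hA.one_add_mul_norm_comp_le T hs.le

theorem integrableOn_rpow_smul_comp_self (hA : IsPositive A M R) (hα : α ∈ Ioo (0 : ℝ) 1) :
    IntegrableOn (fun s : ℝ => s ^ (-α) • (R s).comp (R s)) (Ioi 0) := by
  have hR : ContinuousOn R (Ioi 0) := hA.continuousOn.mono Ioi_subset_Ici_self
  refine integrableOn_rpow_neg_smul_of_norm_le (C := M * M) hα (hR.clm_comp hR) fun s hs => ?_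
  exact (hA.one_add_mul_norm_comp_le (R s) hs.le).trans
    (mul_le_mul_of_nonneg_right (hA.norm_le hs.le) (by linarith [hA.one_le]))

theorem integral_rpow_smul_comp_self [CompleteSpace X] (hA : IsPositive A M R)
    (hα : α ∈ Ioo (0 : ℝ) 1) :
    ∫ s in Ioi 0, s ^ (-α) • (R s).comp (R s)
      = α • (R 0).comp (∫ s in Ioi 0, s ^ (-α) • R s) := by
  have hK : IntegrableOn (fun s : ℝ => α • s ^ (-α) • (R 0).comp (R s)) (Ioi 0) :=
    (hA.integrableOn_rpow_smul_comp hα (R 0)).smul α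
  have hJ := hA.integrableOn_rpow_smul_comp_self hα
  have hFTC := integral_Ioi_of_hasDerivAt_of_tendsto
    (hA.continuousWithinAt_rpow_smul_sub hα.2) (fun _ hx => hA.hasDerivAt_rpow_smul_sub hx)
    (hK.sub hJ) (hA.tendsto_rpow_smul_sub_atTop hα.1)
  have hpull : ∫ s in Ioi 0, s ^ (-α) • (R 0).comp (R s)
      = (R 0).comp (∫ s in Ioi 0, s ^ (-α) • R s) := by
    simpa only [ContinuousLinearMap.compL_apply, ContinuousLinearMap.comp_smul] using
      (ContinuousLinearMap.compL ℂ X X X (R 0)).integral_comp_comm (hA.integrableOn_rpow_smul hα)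
  rw [integral_sub hK hJ, integral_smul, sub_self, smul_zero, sub_zero, sub_eq_zero] at hFTC
  rw [← hFTC, hpull]

end IsPositive

end

theorem stmt8 {X : Type*} [NormedAddCommGroup X] [NormedSpace ℂ X] [CompleteSpace X]
    (M : ℝ) (A : X →ₗ.[ℂ] X) (R : ℝ → X →L[ℂ] X) (hA : IsPositive A M R)
    (α : ℝ) (hα : α ∈ Ioo (0 : ℝ) 1) :
    IntegrableOn (fun s : ℝ => s ^ (-α) • ((R s).comp (R s))) (Ioi 0) ∧
    (Real.sin (π * α) / π) • ∫ s in Ioi (0 : ℝ), s ^ (-α) • ((R s).comp (R s))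
      = α • ((R 0).comp (negPow R α)) := by
  refine ⟨hA.integrableOn_rpow_smul_comp_self hα, ?_⟩
  rw [hA.integral_rpow_smul_comp_self hα, negPow, ContinuousLinearMap.comp_smul, smul_comm]
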